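/- Let (X, 𝒜, μ) be a complete finite measure space with a partial order ≤, and let p denote the metric projection onto L²_≤(X, μ, ℝ). Then p(f + c) = p(f) + c for every f ∈ L²(X, μ, ℝ) and every constant c ∈ ℝ. -/

import Mathlib

open MeasureTheory
open scoped ENNReal

/-- The closed convex cone of elements of `L²(X, μ, ℝ)` having a representative that is
isotonic off a `μ`-null set. -/
def isoL2 {X : Type*} [MeasurableSpace X] [PartialOrder X]
    (μ : Measure X) : Set (Lp ℝ 2 μ) :=
  {f | ∃ f₀ : X → ℝ, (⇑f) =ᵐ[μ] f₀ ∧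
    ∃ N : Set X, μ N = 0 ∧ ∀ x ∉ N, ∀ y ∉ N, x ≤ y → f₀ x ≤ f₀ y}

/-!
Adding an a.e. constant function `C` maps the cone `L²_≤` onto itself (its inverse is adding
`-C`), and translation by `C` is an isometry of `L²`. Hence the distance from `f + C` to the
cone equals the distance from `f` to the cone, and it is attained at `p(f) + C`.
-/

open scoped Pointwise

section

variable {X : Type*} [MeasurableSpace X] [PartialOrder X] {μ : Measure X}

lemma add_mem_isoL2_of_ae_eq_const {g C : Lp ℝ 2 μ} {c : ℝ} (hC : (⇑C) =ᵐ[μ] fun _ => c)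
    (hg : g ∈ isoL2 μ) : g + C ∈ isoL2 μ := by
  obtain ⟨g₀, hg₀, N, hN, hmono⟩ := hg
  refine ⟨fun x => g₀ x + c, ?_, N, hN, fun x hx y hy hxy => ?_⟩
  · filter_upwards [Lp.coeFn_add g C, hg₀, hC] with x hadd hgx hCx
    simp only [hadd, Pi.add_apply, hgx, hCx]
  · exact add_le_add_left (hmono x hx y hy hxy) c

lemma vadd_isoL2_of_ae_eq_const {C : Lp ℝ 2 μ} {c : ℝ} (hC : (⇑C) =ᵐ[μ] fun _ => c) :
    C +ᵥ isoL2 μ = isoL2 μ := by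
  have hnegC : (⇑(-C)) =ᵐ[μ] fun _ => -c := by
    filter_upwards [Lp.coeFn_neg C, hC] with x hneg hCx
    simp only [hneg, Pi.neg_apply, hCx]
  ext g
  rw [Set.mem_vadd_set_iff_neg_vadd_mem, vadd_eq_add]
  constructor
  · intro h
    simpa using add_mem_isoL2_of_ae_eq_const hC h
  · intro h
    simpa [add_comm] using add_mem_isoL2_of_ae_eq_const hnegC h

end

lemma iInf_norm_sub_eq_infDist {E : Type*} [SeminormedAddCommGroup E] (f : E) (s : Set E) :
    ⨅ g : s, ‖f - (g : E)‖ = Metric.infDist f s := by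
  simp only [Metric.infDist_eq_iInf, dist_eq_norm]

lemma infDist_add_right_of_vadd_eq {E : Type*} [SeminormedAddCommGroup E] (f v : E) {s : Set E}
    (hs : v +ᵥ s = s) : Metric.infDist (f + v) s = Metric.infDist f s := by
  conv_lhs => rw [← hs]
  rw [add_comm, ← vadd_eq_add, ← Set.image_vadd, Metric.infDist_image (isometry_vadd E v)]

theorem stmt_9_general {X : Type*} [MeasurableSpace X] [PartialOrder X]
    (μ : Measure X)
    (f fstar C : Lp ℝ 2 μ) (c : ℝ) (hC : (⇑C) =ᵐ[μ] fun _ => c)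
    (hproj : fstar ∈ isoL2 μ ∧
      ‖f - fstar‖ = ⨅ g : isoL2 μ, ‖f - (g : Lp ℝ 2 μ)‖) :
    fstar + C ∈ isoL2 μ ∧
      ‖(f + C) - (fstar + C)‖ = ⨅ g : isoL2 μ, ‖(f + C) - (g : Lp ℝ 2 μ)‖ := by
  obtain ⟨hmem, hdist⟩ := hproj
  refine ⟨add_mem_isoL2_of_ae_eq_const hC hmem, ?_⟩
  rw [add_sub_add_right_eq_sub, hdist, iInf_norm_sub_eq_infDist, iInf_norm_sub_eq_infDist,
    infDist_add_right_of_vadd_eq f C (vadd_isoL2_of_ae_eq_const hC)]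

/-- On a complete finite measure space with a partial order, the metric projection `p`
onto `L²_≤(X, μ, ℝ)` satisfies `p(f + c) = p(f) + c` for every constant `c ∈ ℝ`:
if `fstar` is the metric projection of `f` and `C` is the constant function `c` in `L²`,
then `fstar + C` is the metric projection of `f + C`. -/
theorem stmt_9 {X : Type*} [MeasurableSpace X] [PartialOrder X]
    (μ : Measure X) [μ.IsComplete] [IsFiniteMeasure μ]
    (f fstar C : Lp ℝ 2 μ) (c : ℝ) (hC : (⇑C) =ᵐ[μ] fun _ => c)
    (hproj : fstar ∈ isoL2 μ ∧
      ‖f - fstar‖ = ⨅ g : isoL2 μ, ‖f - (g : Lp ℝ 2 μ)‖) :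
    fstar + C ∈ isoL2 μ ∧
      ‖(f + C) - (fstar + C)‖ = ⨅ g : isoL2 μ, ‖(f + C) - (g : Lp ℝ 2 μ)‖ :=
  stmt_9_general μ f fstar C c hC hproj
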